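/- Conditional on the out-set L⁺_{n}(x) of literal x in F_{n,p} equalling a fixed strictly distinct set X (not containing variable x_{n+1}), the probability that x⇝x̄ after adding variable x_{n+1} (i.e., in F_{n+1,p}) satisfies Pr(x⇝x̄ in F_{n+1,p} | L⁺_n(x)=X) = [1−(1−p)^{|X|}]² + 2[1−(1−p)^{|X|}](1−p)^{|X|}·Pr(x⇝x̄ in F_{n+1−|X|,p}) ≤ p²|X|² + 2p|X|·Pr(x⇝x̄ in F_{n+1−|X|,p}). -/

import Mathlib

/-- The probability of an event `A` when each coordinate `e : E` is an
independent Bernoulli(`p`) bit. -/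
noncomputable def bernoulliPr {E : Type*} [Fintype E] [DecidableEq E]
    (p : ℝ) (A : Set (E → Bool)) : ℝ :=
  ∑ ω : E → Bool,
    Set.indicator A (fun ω' => ∏ e : E, if ω' e = true then p else 1 - p) ω

/-- A literal over `n` Boolean variables. -/
abbrev Lit (n : ℕ) := Fin n × Bool

/-- Negation of a literal. -/
def negLit {n : ℕ} (x : Lit n) : Lit n := (x.1, !x.2)

/-- Edge relation of the implication digraph of the random 2-SAT formula
encoded by `ω` : there is an edge `x → y` iff the clause `x̄ ∨ y` (an unordered
pair of strictly distinct literals) is present. -/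
def fEdge {n : ℕ} (ω : Sym2 (Lit n) → Bool) (x y : Lit n) : Prop :=
  x.1 ≠ y.1 ∧ ω s(negLit x, y) = true

/-- Directed reachability in the implication digraph (`x ⇝ x` by convention). -/
def freach {n : ℕ} (ω : Sym2 (Lit n) → Bool) : Lit n → Lit n → Prop :=
  Relation.ReflTransGen (fEdge ω)

/-- The out-set `L⁺(x)` of a literal `x`. -/
def outSet {n : ℕ} (ω : Sym2 (Lit n) → Bool) (x : Lit n) : Set (Lit n) :=
  {y | freach ω x y}

/-- A set of literals is strictly distinct if it contains no literal together
with its negation. -/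
def SDset {n : ℕ} (M : Set (Lit n)) : Prop := ∀ y ∈ M, negLit y ∉ M

/-- `P_{n,p}(k)` : the probability that in the random 2-SAT formula `F_{n,p}`
the out-set of the literal `x` consists of exactly `k` strictly distinct
literals. -/
noncomputable def Pnp (n : ℕ) (p : ℝ) (k : ℕ) (x : Lit n) : ℝ :=
  bernoulliPr p
    {ω : Sym2 (Lit n) → Bool | SDset (outSet ω x) ∧ (outSet ω x).ncard = k}

/-- The random graph `G_{n,q}` encoded by a configuration of edge-bits. -/
def graphOf {n : ℕ} (η : Sym2 (Fin n) → Bool) : SimpleGraph (Fin n) :=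
  SimpleGraph.fromRel fun a b => η s(a, b) = true

/-- The probability that `G_{k,p}` is connected. -/
noncomputable def connPr (k : ℕ) (p : ℝ) : ℝ :=
  bernoulliPr p {η : Sym2 (Fin k) → Bool | (graphOf η).Connected}

/-- `Q_{n,p}(k)` : the probability that the connected component of the vertex
`v` in `G_{n,2p-p²}` has exactly `k` vertices. -/
noncomputable def Qnp (n : ℕ) (p : ℝ) (k : ℕ) (v : Fin n) : ℝ :=
  bernoulliPr (2 * p - p ^ 2)
    {η : Sym2 (Fin n) → Bool | {y | (graphOf η).Reachable v y}.ncard = k}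

/-- The probability that `x ⇝ x̄` in `F_{m,p}` for a (fixed, canonical) literal;
this probability does not depend on the choice of the literal.  For `m = 0`
there are no literals and the value is `0`. -/
noncomputable def spineProb (m : ℕ) (p : ℝ) : ℝ :=
  if h : 0 < m then
    bernoulliPr p
      {ω : Sym2 (Lit m) → Bool |
        freach ω ((⟨0, h⟩, true) : Lit m) (negLit ((⟨0, h⟩, true) : Lit m))}
  else 0

/-- Edges of the implication digraph of the subformula using only the first `t`
variables. -/
def edgeBelow {m : ℕ} (t : ℕ) (ω : Sym2 (Lit m) → Bool) (u v : Lit m) : Prop :=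
  (u.1 : ℕ) < t ∧ (v.1 : ℕ) < t ∧ u.1 ≠ v.1 ∧ ω s(negLit u, v) = true

/-- Reachability using only the first `t` variables. -/
def reachBelow {m : ℕ} (t : ℕ) (ω : Sym2 (Lit m) → Bool) :
    Lit m → Lit m → Prop :=
  Relation.ReflTransGen (edgeBelow t ω)

/-- The embedding of literals on `n` variables into literals on `n + 1`
variables. -/
def embedLit {n : ℕ} (z : Lit n) : Lit (n + 1) := (Fin.castSucc z.1, z.2)

/-!
Write `X'` for `embedLit '' X` and `z`, `z̄` for the literals of the new variable. The
conditioning event only involves clauses that avoid the new variable and meet a variable of `X`.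
Given it, every edge leaving `X'` goes to `z` or `z̄`, and by skew-symmetry a path that enters a
variable of `X` through a literal outside `X'` can only come from `z` or `z̄`. Hence `x ⇝ x̄` iff
`X'` has edges to both `z` and `z̄`, or an edge to exactly one of them, say `z`, and `z ⇝ z̄`
through the variables outside `X`. These events are built from clauses disjoint from the
conditioning ones and from each other, so their probabilities multiply: `X'` has no edge to `z`
with probability `(1-p)^|X|`, and relabelling the `n + 1 - |X|` variables outside `X` turns
`z ⇝ z̄` into the event defining `spineProb`. The bound is Bernoulli's inequality
`1 - (1-p)^c ≤ c p`.
-/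

open Function

section DependsOn

variable {ι : Type*} {α : ι → Type*} {A B : Set (Π i, α i)} {S T : Set ι}

lemma DependsOn.mem_compl (hA : DependsOn (· ∈ A) S) : DependsOn (· ∈ Aᶜ) S :=
  fun _ _ h => congrArg Not (hA h)

lemma DependsOn.mem_inter (hA : DependsOn (· ∈ A) S) (hB : DependsOn (· ∈ B) T) :
    DependsOn (· ∈ A ∩ B) (S ∪ T) :=
  fun _ _ h => congrArg₂ And (hA fun i hi => h i (.inl hi)) (hB fun i hi => h i (.inr hi))

end DependsOn

section BernoulliPr

variable {E F : Type*} [Fintype E] [Fintype F] {p : ℝ}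

noncomputable def bernoulliWeight (p : ℝ) (ω : E → Bool) : ℝ :=
  ∏ e : E, if ω e = true then p else 1 - p

lemma bernoulliWeight_nonneg (hp0 : 0 ≤ p) (hp1 : p ≤ 1) (ω : E → Bool) :
    0 ≤ bernoulliWeight p ω :=
  Finset.prod_nonneg fun e _ => by split <;> linarith

variable [DecidableEq E] [DecidableEq F]

lemma sum_bernoulliWeight : ∑ ω : E → Bool, bernoulliWeight p ω = 1 := by
  simp [bernoulliWeight,
    ← Fintype.prod_sum (fun (_ : E) (b : Bool) => if b = true then p else 1 - p)]

lemma bernoulliPr_eq_sum (A : Set (E → Bool)) :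
    bernoulliPr p A = ∑ ω, A.indicator (bernoulliWeight p) ω := rfl

lemma bernoulliPr_univ : bernoulliPr p (Set.univ : Set (E → Bool)) = 1 := by
  simpa [bernoulliPr_eq_sum] using sum_bernoulliWeight

lemma bernoulliPr_union {A B : Set (E → Bool)} (h : Disjoint A B) :
    bernoulliPr p (A ∪ B) = bernoulliPr p A + bernoulliPr p B := by
  simp only [bernoulliPr_eq_sum, Set.indicator_union_of_disjoint h, Finset.sum_add_distrib]

lemma bernoulliPr_compl (A : Set (E → Bool)) :
    bernoulliPr p Aᶜ = 1 - bernoulliPr p A := by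
  rw [← bernoulliPr_univ (E := E) (p := p), ← Set.union_compl_self A,
    bernoulliPr_union disjoint_compl_right]
  ring

lemma bernoulliPr_nonneg (hp0 : 0 ≤ p) (hp1 : p ≤ 1) (A : Set (E → Bool)) :
    0 ≤ bernoulliPr p A :=
  Finset.sum_nonneg fun ω _ =>
    Set.indicator_nonneg (fun ω _ => bernoulliWeight_nonneg hp0 hp1 ω) ω

lemma bernoulliPr_singleton (σ : E → Bool) : bernoulliPr p {σ} = bernoulliWeight p σ := by
  rw [bernoulliPr_eq_sum, Finset.sum_eq_single σ (fun ω _ h => by simp [h]) (by simp)]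
  simp

/-- The coordinates outside `S` are set to `false`; for an event depending only on `S` this choice
is immaterial. -/
def restrictEvent (S : Set E) [DecidablePred (· ∈ S)] (A : Set (E → Bool)) :
    Set (S → Bool) :=
  {σ | (fun e => if h : e ∈ S then σ ⟨e, h⟩ else false) ∈ A}

lemma bernoulliPr_inter_eq_mul_restrictEvent (S : Set E) [DecidablePred (· ∈ S)]
    {A B : Set (E → Bool)} (hA : DependsOn (· ∈ A) S) (hB : DependsOn (· ∈ B) Sᶜ) :
    bernoulliPr p (A ∩ B) =
      bernoulliPr p (restrictEvent S A) * bernoulliPr p (restrictEvent Sᶜ B) := by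
  let glue := (Equiv.piEquivPiSubtypeProd (· ∈ S) (fun _ => Bool)).symm
  have glue_apply : ∀ σ τ e,
      glue (σ, τ) e = if h : e ∈ S then σ ⟨e, h⟩ else τ ⟨e, h⟩ := fun _ _ _ => rfl
  rw [bernoulliPr_eq_sum, ← glue.sum_comp, Fintype.sum_prod_type, bernoulliPr_eq_sum,
    bernoulliPr_eq_sum, Finset.sum_mul_sum]
  refine Finset.sum_congr rfl fun σ _ => Finset.sum_congr rfl fun τ _ => ?_
  have hA' : glue (σ, τ) ∈ A ↔ σ ∈ restrictEvent S A :=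
    (hA fun e he => by simp [glue_apply, he]).to_iff
  have hB' : glue (σ, τ) ∈ B ↔ τ ∈ restrictEvent Sᶜ B :=
    (hB fun e he => by simp_all).to_iff
  have hw : bernoulliWeight p (glue (σ, τ)) = bernoulliWeight p σ * bernoulliWeight p τ := by
    rw [bernoulliWeight, ← Fintype.prod_subtype_mul_prod_subtype (· ∈ S)]
    congr 1 <;> refine Fintype.prod_congr _ _ fun ⟨e, he⟩ => ?_ <;> simp [glue_apply, he]
  by_cases ha : σ ∈ restrictEvent S A <;> by_cases hb : τ ∈ restrictEvent Sᶜ B <;>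
    simp [Set.indicator, hA', hB', ha, hb, hw]

lemma bernoulliPr_eq_restrictEvent (S : Set E) [DecidablePred (· ∈ S)] {A : Set (E → Bool)}
    (hA : DependsOn (· ∈ A) S) : bernoulliPr p A = bernoulliPr p (restrictEvent S A) := by
  have hU : restrictEvent Sᶜ (Set.univ : Set (E → Bool)) = Set.univ := rfl
  simpa [hU, bernoulliPr_univ] using
    bernoulliPr_inter_eq_mul_restrictEvent (p := p) (B := Set.univ) S hA fun _ _ _ => rfl

lemma bernoulliPr_inter_of_dependsOn {S T : Set E} (hST : Disjoint S T) {A B : Set (E → Bool)}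
    (hA : DependsOn (· ∈ A) S) (hB : DependsOn (· ∈ B) T) :
    bernoulliPr p (A ∩ B) = bernoulliPr p A * bernoulliPr p B := by
  classical
  have hB' := hB.mono hST.subset_compl_left
  rw [bernoulliPr_inter_eq_mul_restrictEvent S hA hB', bernoulliPr_eq_restrictEvent S hA,
    bernoulliPr_eq_restrictEvent Sᶜ hB']

lemma bernoulliPr_comp_equiv (g : E ≃ F) (A : Set (E → Bool)) :
    bernoulliPr p {η : F → Bool | η ∘ g ∈ A} = bernoulliPr p A := by
  rw [bernoulliPr_eq_sum, bernoulliPr_eq_sum, ← (g.arrowCongr (Equiv.refl Bool)).sum_comp]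
  refine Finset.sum_congr rfl fun ω _ => ?_
  have hcomp : g.arrowCongr (Equiv.refl Bool) ω ∘ g = ω := by ext; simp
  have hw : bernoulliWeight p (g.arrowCongr (Equiv.refl Bool) ω) = bernoulliWeight p ω := by
    simp [bernoulliWeight, ← g.prod_comp]
  have hmem :
      g.arrowCongr (Equiv.refl Bool) ω ∈ {η : F → Bool | η ∘ g ∈ A} ↔ ω ∈ A := by
    rw [Set.mem_ofPred_eq, hcomp]
  by_cases h : ω ∈ A
  · rw [Set.indicator_of_mem (hmem.2 h), Set.indicator_of_mem h, hw]
  · rw [Set.indicator_of_notMem (mt hmem.1 h), Set.indicator_of_notMem h]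

lemma bernoulliPr_comp_embedding (φ : E ↪ F) (A : Set (E → Bool)) :
    bernoulliPr p {ω : F → Bool | ω ∘ φ ∈ A} = bernoulliPr p A := by
  classical
  have hdep : DependsOn (· ∈ {ω : F → Bool | ω ∘ φ ∈ A}) (Set.range φ) := by
    intro ω ω' h
    simp only [Set.mem_ofPred_eq, show ω ∘ φ = ω' ∘ φ from funext fun e => h _ ⟨e, rfl⟩]
  rw [bernoulliPr_eq_restrictEvent _ hdep,
    ← bernoulliPr_comp_equiv (Equiv.ofInjective φ φ.injective)]
  congr! 1
  ext σ
  simp [restrictEvent, Function.comp_def]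

lemma bernoulliPr_forall_eq_false (K : Finset F) :
    bernoulliPr p {ω : F → Bool | ∀ e ∈ K, ω e = false} = (1 - p) ^ K.card := by
  have hset : {ω : F → Bool | ∀ e ∈ K, ω e = false} =
      {ω | ω ∘ Embedding.subtype (· ∈ K) ∈ ({fun _ => false} : Set (K → Bool))} := by
    ext ω
    simp [funext_iff]
  rw [hset, bernoulliPr_comp_embedding, bernoulliPr_singleton]
  simp [bernoulliWeight]

end BernoulliPr

namespace Relation.ReflTransGen

variable {α β : Type*} {r r' : α → α → Prop} {a b : α}

lemma mem_of_closed {R : Set α} (hR : ∀ u v, u ∈ R → r u v → v ∈ R) (ha : a ∈ R)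
    (h : ReflTransGen r a b) : b ∈ R := by
  induction h with
  | refl => exact ha
  | tail _ huv ih => exact hR _ _ ih huv

lemma iff_of_agree (h : ∀ u, ReflTransGen r a u → ∀ v, (r u v ↔ r' u v)) :
    ReflTransGen r a b ↔ ReflTransGen r' a b := by
  constructor <;> intro hab
  · induction hab with
    | refl => exact .refl
    | tail hau huv ih => exact ih.tail ((h _ hau _).1 huv)
  · induction hab with
    | refl => exact .refl
    | tail _ huv ih => exact ih.tail ((h _ ih _).2 huv)

lemma comap_iff {s : β → β → Prop} {g : α → β} (hg : Injective g)
    (h : ∀ a v, s (g a) v ↔ ∃ b, g b = v ∧ r a b) :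
    ReflTransGen s (g a) (g b) ↔ ReflTransGen r a b := by
  refine ⟨fun hs => ?_, lift g (fun u v huv => (h u (g v)).2 ⟨v, rfl, huv⟩) _ _⟩
  suffices ∀ v, ReflTransGen s (g a) v → ∃ c, g c = v ∧ ReflTransGen r a c by
    obtain ⟨c, hc, hac⟩ := this _ hs
    rwa [← hg hc]
  intro v hv
  induction hv with
  | refl => exact ⟨a, rfl, .refl⟩
  | tail _ huv ih =>
    obtain ⟨c, rfl, hac⟩ := ih
    obtain ⟨d, rfl, hcd⟩ := (h c _).1 huv
    exact ⟨d, rfl, hac.tail hcd⟩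

end Relation.ReflTransGen

section Implication

variable {m k : ℕ} {ω : Sym2 (Lit m) → Bool} {a b : Lit m}

@[simp]
lemma negLit_negLit (l : Lit m) : negLit (negLit l) = l := by
  simp [negLit]

lemma negLit_injective : Injective (negLit (n := m)) :=
  fun a b h => by simpa using congrArg negLit h

lemma fEdge.skew (h : fEdge ω a b) : fEdge ω (negLit b) (negLit a) :=
  ⟨Ne.symm h.1, by rw [negLit_negLit, Sym2.eq_swap]; exact h.2⟩

lemma freach.skew (h : freach ω a b) : freach ω (negLit b) (negLit a) := by
  induction h with
  | refl => exact .refl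
  | tail _ hbc ih => exact .head hbc.skew ih

def edgeWithin (S : Set (Fin m)) (ω : Sym2 (Lit m) → Bool) (u v : Lit m) : Prop :=
  u.1 ∈ S ∧ v.1 ∈ S ∧ fEdge ω u v

def reachWithin (S : Set (Fin m)) (ω : Sym2 (Lit m) → Bool) : Lit m → Lit m → Prop :=
  Relation.ReflTransGen (edgeWithin S ω)

variable {S : Set (Fin m)}

lemma reachWithin.freach (h : reachWithin S ω a b) : freach ω a b :=
  Relation.ReflTransGen.mono (fun _ _ huv => huv.2.2) _ _ h

lemma reachWithin.eq_or_mem (h : reachWithin S ω a b) : b = a ∨ b.1 ∈ S := by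
  rcases Relation.ReflTransGen.cases_tail h with rfl | ⟨c, _, hcb⟩
  exacts [.inl rfl, .inr hcb.2.1]

lemma dependsOn_reachWithin (S : Set (Fin m)) (a b : Lit m) :
    DependsOn (· ∈ {ω | reachWithin S ω a b}) {e | ∀ l ∈ e, l.1 ∈ S} := by
  intro ω ω' h
  have hedge : edgeWithin S ω = edgeWithin S ω' := by
    ext u v
    refine and_congr_right fun hu => and_congr_right fun hv => and_congr_right fun _ => ?_
    rw [h _ fun l hl => by rcases Sym2.mem_iff.1 hl with rfl | rfl <;> assumption]
  simp only [Set.mem_ofPred_eq, reachWithin, hedge]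

/-- The global sign flip `s` lets the literal `(0, true)` of `spineProb` go to either literal of a
variable. -/
def relabelLit (f : Fin k → Fin m) (s : Bool) (l : Lit k) : Lit m := (f l.1, xor s l.2)

lemma relabelLit_negLit (f : Fin k → Fin m) (s : Bool) (l : Lit k) :
    relabelLit f s (negLit l) = negLit (relabelLit f s l) := by
  simp [relabelLit, negLit]

lemma relabelLit_injective {f : Fin k → Fin m} (hf : Injective f) (s : Bool) :
    Injective (relabelLit f s) := fun a b h => by
  simp only [relabelLit, Prod.mk.injEq, Bool.xor_right_inj] at h
  exact Prod.ext (hf h.1) h.2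

lemma reachWithin_range_relabelLit_iff {f : Fin k → Fin m} (hf : Injective f) (s : Bool)
    (ω : Sym2 (Lit m) → Bool) (a b : Lit k) :
    reachWithin (Set.range f) ω (relabelLit f s a) (relabelLit f s b) ↔
      freach (ω ∘ Sym2.map (relabelLit f s)) a b := by
  refine Relation.ReflTransGen.comap_iff (relabelLit_injective hf s) fun u v => ?_
  have hbit : ∀ w, ω (Sym2.map (relabelLit f s) s(negLit u, w)) =
      ω s(negLit (relabelLit f s u), relabelLit f s w) := fun w => by
    rw [Sym2.map_mk, relabelLit_negLit]
  constructor
  · rintro ⟨-, ⟨j, hj⟩, hne, hω⟩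
    refine ⟨(j, xor s v.2), by simp [relabelLit, hj], fun h => hne ?_, ?_⟩
    · simp [relabelLit, h, hj]
    · rw [comp_apply, hbit]
      convert hω
      simp [relabelLit, hj]
  · rintro ⟨w, rfl, hne, hω⟩
    exact ⟨⟨u.1, rfl⟩, ⟨w.1, rfl⟩, hf.ne hne, by rw [← hbit]; exact hω⟩

lemma bernoulliPr_reachWithin_range {f : Fin k → Fin m} (hf : Injective f) (s : Bool)
    (p : ℝ) (a b : Lit k) :
    bernoulliPr p {ω : Sym2 (Lit m) → Bool |
        reachWithin (Set.range f) ω (relabelLit f s a) (relabelLit f s b)} =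
      bernoulliPr p {η : Sym2 (Lit k) → Bool | freach η a b} := by
  let φ : Sym2 (Lit k) ↪ Sym2 (Lit m) :=
    ⟨Sym2.map (relabelLit f s), Sym2.map.injective (relabelLit_injective hf s)⟩
  simp_rw [reachWithin_range_relabelLit_iff hf]
  exact bernoulliPr_comp_embedding φ {η | freach η a b}

lemma Finset.exists_injective_fin_range_eq {α : Type*} {W : Finset α} {i : α} (hi : i ∈ W) :
    ∃ f : Fin W.card → α, Injective f ∧ Set.range f = W ∧
      f ⟨0, Finset.card_pos.2 ⟨i, hi⟩⟩ = i := by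
  set e : Fin W.card ≃ W := W.equivFin.symm
  set j₀ : Fin W.card := ⟨0, Finset.card_pos.2 ⟨i, hi⟩⟩
  refine ⟨fun j => e (Equiv.swap j₀ (e.symm ⟨i, hi⟩) j), ?_, ?_, by simp⟩
  · exact Subtype.val_injective.comp (e.injective.comp (Equiv.injective _))
  · ext a
    simp only [Set.mem_range, Finset.mem_coe]
    refine ⟨fun ⟨j, hj⟩ => hj ▸ (e _).2, fun ha => ?_⟩
    exact ⟨Equiv.swap j₀ (e.symm ⟨i, hi⟩) (e.symm ⟨a, ha⟩), by simp⟩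

lemma bernoulliPr_reachWithin_eq_spineProb (p : ℝ) {W : Finset (Fin m)} {i : Fin m}
    (hi : i ∈ W) (b : Bool) :
    bernoulliPr p {ω : Sym2 (Lit m) → Bool | reachWithin ↑W ω (i, b) (i, !b)} =
      spineProb W.card p := by
  have hk : 0 < W.card := Finset.card_pos.2 ⟨i, hi⟩
  obtain ⟨f, hf, hrange, hf0⟩ := Finset.exists_injective_fin_range_eq hi
  have hlit : ∀ c, relabelLit f (!b) (⟨0, hk⟩, c) = (i, xor (!b) c) :=
    fun c => by simp [relabelLit, hf0]
  have := bernoulliPr_reachWithin_range hf (!b) p (⟨0, hk⟩, true) (⟨0, hk⟩, false)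
  rw [hlit, hlit, hrange] at this
  rw [spineProb, dif_pos hk]
  simpa [negLit] using this

end Implication

section NewVariable

variable {n : ℕ} {X : Finset (Lit n)} {l : Lit (n + 1)}

def lastLit (n : ℕ) (b : Bool) : Lit (n + 1) := (Fin.last n, b)

def varSet (X : Finset (Lit n)) : Finset (Fin (n + 1)) := X.image fun u => Fin.castSucc u.1

lemma embedLit_injective : Injective (embedLit (n := n)) := fun u v h => by
  simpa [embedLit, Prod.ext_iff] using h

lemma negLit_embedLit (u : Lit n) : negLit (embedLit u) = embedLit (negLit u) := rfl

lemma embedLit_fst_ne_last (u : Lit n) : (embedLit u).1 ≠ Fin.last n :=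
  (Fin.castSucc_lt_last _).ne

lemma eq_lastLit_of_fst_eq_last (h : l.1 = Fin.last n) : l = lastLit n l.2 :=
  Prod.ext h rfl

lemma last_not_mem_varSet : Fin.last n ∉ varSet X := by
  simp [varSet, (Fin.castSucc_lt_last _).ne]

lemma fst_mem_varSet (h : l ∈ embedLit '' (X : Set (Lit n))) : l.1 ∈ varSet X := by
  obtain ⟨u, hu, rfl⟩ := h
  exact Finset.mem_image_of_mem _ hu

lemma mem_or_negLit_mem_of_fst_mem_varSet (h : l.1 ∈ varSet X) :
    l ∈ embedLit '' (X : Set (Lit n)) ∨ negLit l ∈ embedLit '' (X : Set (Lit n)) := by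
  obtain ⟨u, hu, hul⟩ := Finset.mem_image.1 h
  obtain ⟨i, b⟩ := l
  obtain ⟨j, c⟩ := u
  obtain rfl : Fin.castSucc j = i := hul
  cases b <;> cases c <;> simp_all [embedLit, negLit]

lemma SDset.negLit_not_mem_image_embedLit (hsd : SDset (X : Set (Lit n)))
    (hl : l ∈ embedLit '' (X : Set (Lit n))) : negLit l ∉ embedLit '' (X : Set (Lit n)) := by
  obtain ⟨u, hu, rfl⟩ := hl
  rintro ⟨v, hv, hvu⟩
  rw [negLit_embedLit, embedLit_injective.eq_iff] at hvu
  exact hsd u hu (hvu ▸ hv)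

lemma SDset.injOn_fst (hsd : SDset (X : Set (Lit n))) : Set.InjOn Prod.fst (X : Set (Lit n)) := by
  rintro ⟨i, b⟩ hu ⟨j, c⟩ hv (rfl : i = j)
  obtain rfl | rfl : c = b ∨ c = !b := by cases b <;> cases c <;> simp
  · rfl
  · exact absurd hv (hsd _ hu)

lemma SDset.card_varSet (hsd : SDset (X : Set (Lit n))) : (varSet X).card = X.card :=
  Finset.card_image_of_injOn fun _ hu _ hv h => hsd.injOn_fst hu hv (Fin.castSucc_injective _ h)

def belowOutSetEvent (x : Lit n) (X : Finset (Lit n)) : Set (Sym2 (Lit (n + 1)) → Bool) :=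
  {ω | {y | reachBelow n ω (embedLit x) y} = embedLit '' (X : Set (Lit n))}

def linkClause (n : ℕ) (b : Bool) (u : Lit n) : Sym2 (Lit (n + 1)) :=
  s(negLit (embedLit u), lastLit n b)

def linkEvent (X : Finset (Lit n)) (b : Bool) : Set (Sym2 (Lit (n + 1)) → Bool) :=
  {ω | ∃ u ∈ X, ω (linkClause n b u) = true}

def spineEvent (X : Finset (Lit n)) (b : Bool) : Set (Sym2 (Lit (n + 1)) → Bool) :=
  {ω | reachWithin ↑(varSet X)ᶜ ω (lastLit n b) (lastLit n !b)}

def exclusiveEvent (X : Finset (Lit n)) (b : Bool) : Set (Sym2 (Lit (n + 1)) → Bool) :=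
  linkEvent X b ∩ (linkEvent X !b)ᶜ ∩ spineEvent X b

def throughLastEvent (X : Finset (Lit n)) : Set (Sym2 (Lit (n + 1)) → Bool) :=
  linkEvent X true ∩ linkEvent X false ∪ exclusiveEvent X true ∪ exclusiveEvent X false

variable {x : Lit n} {ω : Sym2 (Lit (n + 1)) → Bool} {u v : Lit (n + 1)}

lemma mem_linkEvent_iff {b : Bool} :
    ω ∈ linkEvent X b ↔ ∃ u ∈ embedLit '' (X : Set (Lit n)), fEdge ω u (lastLit n b) := by
  constructor
  · rintro ⟨u, hu, hω⟩
    exact ⟨embedLit u, ⟨u, hu, rfl⟩, embedLit_fst_ne_last u, hω⟩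
  · rintro ⟨-, ⟨u, hu, rfl⟩, -, hω⟩
    exact ⟨u, hu, hω⟩

section Conditioned

variable (hB : ω ∈ belowOutSetEvent x X)
include hB

lemma mem_belowOutSetEvent_iff :
    reachBelow n ω (embedLit x) u ↔ u ∈ embedLit '' (X : Set (Lit n)) :=
  Set.ext_iff.1 hB u

lemma embedLit_mem_of_mem_belowOutSetEvent : embedLit x ∈ embedLit '' (X : Set (Lit n)) :=
  (mem_belowOutSetEvent_iff hB).1 .refl

lemma freach_of_mem_belowOutSetEvent (hu : u ∈ embedLit '' (X : Set (Lit n))) :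
    freach ω (embedLit x) u :=
  Relation.ReflTransGen.mono (fun _ _ h => h.2.2) _ _ ((mem_belowOutSetEvent_iff hB).2 hu)

lemma mem_or_last_of_fEdge (hu : u ∈ embedLit '' (X : Set (Lit n))) (he : fEdge ω u v) :
    v ∈ embedLit '' (X : Set (Lit n)) ∨ v.1 = Fin.last n := by
  refine or_iff_not_imp_right.2 fun hv => (mem_belowOutSetEvent_iff hB).1 ?_
  obtain ⟨u, hu, rfl⟩ := hu
  exact ((mem_belowOutSetEvent_iff hB).2 ⟨u, hu, rfl⟩).tail ⟨u.1.2, Fin.val_lt_last hv, he⟩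

lemma mem_of_fEdge_of_not_mem_linkEvent (hu : u ∈ embedLit '' (X : Set (Lit n)))
    (he : fEdge ω u v) (hL : ω ∉ linkEvent X v.2) : v ∈ embedLit '' (X : Set (Lit n)) :=
  (mem_or_last_of_fEdge hB hu he).resolve_right fun hv =>
    hL (mem_linkEvent_iff.2 ⟨u, hu, eq_lastLit_of_fst_eq_last hv ▸ he⟩)

lemma freach_of_mem_linkEvent {b : Bool} (hL : ω ∈ linkEvent X b) {w : Lit (n + 1)}
    (hw : w ∈ embedLit '' (X : Set (Lit n))) (h : freach ω (lastLit n b) (negLit w)) :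
    freach ω (embedLit x) (negLit (embedLit x)) := by
  obtain ⟨u, hu, hedge⟩ := mem_linkEvent_iff.1 hL
  exact (((freach_of_mem_belowOutSetEvent hB hu).tail hedge).trans h).trans
    (freach_of_mem_belowOutSetEvent hB hw).skew

lemma freach_of_mem_linkEvent_inter (h1 : ω ∈ linkEvent X true) (h2 : ω ∈ linkEvent X false) :
    freach ω (embedLit x) (negLit (embedLit x)) := by
  obtain ⟨w, hw, he⟩ := mem_linkEvent_iff.1 h2
  exact freach_of_mem_linkEvent hB h1 hw (.single he.skew)

lemma freach_of_mem_exclusiveEvent {b : Bool} (h : ω ∈ exclusiveEvent X b) :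
    freach ω (embedLit x) (negLit (embedLit x)) := by
  obtain ⟨⟨hL, -⟩, hC⟩ := h
  obtain ⟨w, hw, he⟩ := mem_linkEvent_iff.1 hL
  exact freach_of_mem_linkEvent hB hL hw (hC.freach.tail he.skew)

lemma mem_or_reachWithin_of_fEdge_of_mem {b : Bool} (hL : ω ∉ linkEvent X !b)
    (hu : u ∈ embedLit '' (X : Set (Lit n))) (he : fEdge ω u v) :
    v ∈ embedLit '' (X : Set (Lit n)) ∨ reachWithin ↑(varSet X)ᶜ ω (lastLit n b) v := by
  refine (mem_or_last_of_fEdge hB hu he).imp_right fun hv => ?_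
  obtain hvb | hvb : v.2 = b ∨ v.2 = !b := by cases v.2 <;> cases b <;> simp
  · rw [eq_lastLit_of_fst_eq_last hv, hvb]
    exact .refl
  · exact absurd (mem_linkEvent_iff.2 ⟨u, hu, hvb ▸ eq_lastLit_of_fst_eq_last hv ▸ he⟩) hL

/-- If `negLit v ∈ X'`, the skew edge `negLit v → negLit u` leaves `X'`, so `u` is a literal of
the new variable. -/
lemma mem_or_reachWithin_of_fEdge_of_reachWithin {b : Bool} (hL : ω ∉ linkEvent X !b)
    (hC : ω ∉ spineEvent X b) (hu : reachWithin ↑(varSet X)ᶜ ω (lastLit n b) u)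
    (he : fEdge ω u v) :
    v ∈ embedLit '' (X : Set (Lit n)) ∨ reachWithin ↑(varSet X)ᶜ ω (lastLit n b) v := by
  have hu₁ : u.1 ∉ varSet X := by
    rcases hu.eq_or_mem with rfl | hu₁
    exacts [last_not_mem_varSet, Finset.mem_compl.1 hu₁]
  by_cases hv₁ : v.1 ∈ varSet X
  · refine (mem_or_negLit_mem_of_fst_mem_varSet hv₁).imp_right fun hv => absurd ?_ hu₁
    rcases mem_or_last_of_fEdge hB hv he.skew with hu' | hu'
    · exact fst_mem_varSet (l := negLit u) hu'
    obtain hub | hub : u.2 = b ∨ u.2 = !b := by cases u.2 <;> cases b <;> simp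
    · have hnu : negLit u = lastLit n !b := Prod.ext hu' (by simp [negLit, lastLit, hub])
      exact absurd (mem_linkEvent_iff.2 ⟨_, hv, hnu ▸ he.skew⟩) hL
    · obtain rfl : u = lastLit n !b := Prod.ext hu' hub
      exact absurd hu hC
  · exact .inr (hu.tail ⟨Finset.mem_compl.2 hu₁, Finset.mem_compl.2 hv₁, he⟩)

variable (hsd : SDset (X : Set (Lit n)))
include hsd

lemma not_freach_of_not_mem_linkEvent (h1 : ω ∉ linkEvent X true)
    (h2 : ω ∉ linkEvent X false) : ¬ freach ω (embedLit x) (negLit (embedLit x)) := fun hr =>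
  have hx := embedLit_mem_of_mem_belowOutSetEvent hB
  hsd.negLit_not_mem_image_embedLit hx <| Relation.ReflTransGen.mem_of_closed
    (fun _ v hu he => mem_of_fEdge_of_not_mem_linkEvent hB hu he (by cases v.2 <;> assumption))
    hx hr

/-- If `ω ∉ spineEvent X b`, then `X'` together with what `lastLit n b` reaches outside `X` is
closed under edges and misses `negLit (embedLit x)`. -/
lemma mem_spineEvent_of_freach {b : Bool} (hL : ω ∉ linkEvent X !b)
    (hr : freach ω (embedLit x) (negLit (embedLit x))) : ω ∈ spineEvent X b := by
  by_contra hC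
  have hx := embedLit_mem_of_mem_belowOutSetEvent hB
  set R : Set (Lit (n + 1)) :=
    embedLit '' (X : Set (Lit n)) ∪ {l | reachWithin ↑(varSet X)ᶜ ω (lastLit n b) l}
  have hclosed : ∀ u v, u ∈ R → fEdge ω u v → v ∈ R := by
    rintro u v (hu | hu) he
    exacts [mem_or_reachWithin_of_fEdge_of_mem hB hL hu he,
      mem_or_reachWithin_of_fEdge_of_reachWithin hB hL hC hu he]
  rcases Relation.ReflTransGen.mem_of_closed hclosed (.inl hx) hr with hnx | hnx
  · exact hsd.negLit_not_mem_image_embedLit hx hnx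
  · rcases hnx.eq_or_mem with h | h
    · exact embedLit_fst_ne_last x (congrArg Prod.fst h)
    · exact Finset.mem_compl.1 h (fst_mem_varSet (l := embedLit x) hx)

lemma freach_iff_mem_throughLastEvent :
    freach ω (embedLit x) (negLit (embedLit x)) ↔ ω ∈ throughLastEvent X := by
  constructor
  · intro hr
    by_cases h1 : ω ∈ linkEvent X true <;> by_cases h2 : ω ∈ linkEvent X false
    · exact .inl (.inl ⟨h1, h2⟩)
    · exact .inl (.inr ⟨⟨h1, h2⟩, mem_spineEvent_of_freach hB hsd h2 hr⟩)
    · exact .inr ⟨⟨h2, h1⟩, mem_spineEvent_of_freach hB hsd h1 hr⟩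
    · exact absurd hr (not_freach_of_not_mem_linkEvent hB hsd h1 h2)
  · rintro ((⟨h1, h2⟩ | h) | h)
    exacts [freach_of_mem_linkEvent_inter hB h1 h2, freach_of_mem_exclusiveEvent hB h,
      freach_of_mem_exclusiveEvent hB h]

end Conditioned

lemma linkClause_eq_linkClause_iff {b c : Bool} {u w : Lit n} :
    linkClause n b u = linkClause n c w ↔ b = c ∧ u = w := by
  refine ⟨fun h => ?_, by rintro ⟨rfl, rfl⟩; rfl⟩
  rcases Sym2.eq_iff.1 h with ⟨hu, hb⟩ | ⟨hu, -⟩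
  · exact ⟨congrArg Prod.snd hb, embedLit_injective (negLit_injective hu)⟩
  · exact absurd (congrArg Prod.fst hu) (embedLit_fst_ne_last (negLit u))

def innerClauses (X : Finset (Lit n)) : Set (Sym2 (Lit (n + 1))) :=
  {e | (∀ l ∈ e, l.1 ≠ Fin.last n) ∧ ∃ l ∈ e, l.1 ∈ varSet X}

def linkClauses (X : Finset (Lit n)) (b : Bool) : Set (Sym2 (Lit (n + 1))) :=
  linkClause n b '' X

def outerClauses (X : Finset (Lit n)) : Set (Sym2 (Lit (n + 1))) :=
  {e | ∀ l ∈ e, l.1 ∈ (varSet X)ᶜ}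

lemma linkClauses_subset_compl_innerClauses (b : Bool) :
    linkClauses X b ⊆ (innerClauses X)ᶜ := by
  rintro _ ⟨u, -, rfl⟩ ⟨hlast, -⟩
  exact hlast (lastLit n b) (Sym2.mem_mk_right _ _) rfl

lemma outerClauses_subset_compl_innerClauses : outerClauses X ⊆ (innerClauses X)ᶜ := by
  rintro e he ⟨-, l, hl, hlX⟩
  exact Finset.mem_compl.1 (he l hl) hlX

lemma disjoint_linkClauses (b : Bool) : Disjoint (linkClauses X b) (linkClauses X !b) := by
  refine Set.disjoint_left.2 ?_
  rintro _ ⟨u, -, rfl⟩ ⟨w, -, h⟩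
  cases b <;> simp [linkClause_eq_linkClause_iff] at h

lemma disjoint_linkClauses_outerClauses (b : Bool) :
    Disjoint (linkClauses X b) (outerClauses X) := by
  refine Set.disjoint_left.2 ?_
  rintro _ ⟨u, hu, rfl⟩ hout
  exact Finset.mem_compl.1 (hout _ (Sym2.mem_mk_left _ _))
    (fst_mem_varSet (l := embedLit u) ⟨u, hu, rfl⟩)

lemma dependsOn_linkEvent (X : Finset (Lit n)) (b : Bool) :
    DependsOn (· ∈ linkEvent X b) (linkClauses X b) := fun ω ω' h => by
  simp only [linkEvent, Set.mem_ofPred_eq]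
  exact propext <| exists_congr fun u => and_congr_right fun hu => by rw [h _ ⟨u, hu, rfl⟩]

lemma dependsOn_spineEvent (X : Finset (Lit n)) (b : Bool) :
    DependsOn (· ∈ spineEvent X b) (outerClauses X) :=
  dependsOn_reachWithin _ _ _

lemma mem_belowOutSetEvent_of_eqOn {ω ω' : Sym2 (Lit (n + 1)) → Bool}
    (hB : ω ∈ belowOutSetEvent x X) (h : ∀ e ∈ innerClauses X, ω e = ω' e) :
    ω' ∈ belowOutSetEvent x X := by
  have hagree : ∀ u, reachBelow n ω (embedLit x) u →
      ∀ v, edgeBelow n ω u v ↔ edgeBelow n ω' u v := by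
    intro u hu v
    obtain ⟨u₀, hu₀, rfl⟩ := (mem_belowOutSetEvent_iff hB).1 hu
    refine and_congr_right fun _ => and_congr_right fun hv => and_congr_right fun _ => ?_
    rw [h]
    refine ⟨fun l hl => ?_, _, Sym2.mem_mk_left _ _,
      fst_mem_varSet (l := embedLit u₀) ⟨u₀, hu₀, rfl⟩⟩
    rcases Sym2.mem_iff.1 hl with rfl | rfl
    · exact embedLit_fst_ne_last _
    · exact fun hl => by simp [hl] at hv
  rw [belowOutSetEvent, Set.mem_ofPred_eq, ← hB]
  ext y
  exact (Relation.ReflTransGen.iff_of_agree hagree).symm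

lemma dependsOn_belowOutSetEvent (x : Lit n) (X : Finset (Lit n)) :
    DependsOn (· ∈ belowOutSetEvent x X) (innerClauses X) := fun _ _ h =>
  propext ⟨fun hB => mem_belowOutSetEvent_of_eqOn hB h,
    fun hB => mem_belowOutSetEvent_of_eqOn hB fun e he => (h e he).symm⟩

lemma dependsOn_throughLastEvent (X : Finset (Lit n)) :
    DependsOn (· ∈ throughLastEvent X) (innerClauses X)ᶜ := fun ω ω' h => by
  have hL : ∀ b, (ω ∈ linkEvent X b) = (ω' ∈ linkEvent X b) := fun b =>
    (dependsOn_linkEvent X b).mono (linkClauses_subset_compl_innerClauses b) h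
  have hC : ∀ b, (ω ∈ spineEvent X b) = (ω' ∈ spineEvent X b) := fun b =>
    (dependsOn_spineEvent X b).mono outerClauses_subset_compl_innerClauses h
  simp only [throughLastEvent, exclusiveEvent, Set.mem_union, Set.mem_inter_iff,
    Set.mem_compl_iff, hL, hC]

variable {p : ℝ}

lemma bernoulliPr_linkEvent_compl (b : Bool) :
    bernoulliPr p (linkEvent X b)ᶜ = (1 - p) ^ X.card := by
  have hset : (linkEvent X b)ᶜ =
      {ω | ∀ e ∈ X.image (linkClause n b), ω e = false} := by
    ext ω
    simp only [linkEvent, Set.mem_compl_iff, Set.mem_ofPred_eq, not_exists, not_and,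
      Bool.not_eq_true, Finset.forall_mem_image]
  rw [hset, bernoulliPr_forall_eq_false,
    Finset.card_image_of_injective _ fun u w h => (linkClause_eq_linkClause_iff.1 h).2]

lemma bernoulliPr_linkEvent (b : Bool) :
    bernoulliPr p (linkEvent X b) = 1 - (1 - p) ^ X.card := by
  rw [← bernoulliPr_linkEvent_compl b, bernoulliPr_compl, sub_sub_cancel]

lemma bernoulliPr_spineEvent (hsd : SDset (X : Set (Lit n))) (b : Bool) :
    bernoulliPr p (spineEvent X b) = spineProb (n + 1 - X.card) p := by
  rw [spineEvent, lastLit, lastLit,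
    bernoulliPr_reachWithin_eq_spineProb p (Finset.mem_compl.2 last_not_mem_varSet),
    Finset.card_compl, Fintype.card_fin, hsd.card_varSet]

lemma bernoulliPr_exclusiveEvent (hsd : SDset (X : Set (Lit n))) (b : Bool) :
    bernoulliPr p (exclusiveEvent X b) =
      (1 - (1 - p) ^ X.card) * (1 - p) ^ X.card * spineProb (n + 1 - X.card) p := by
  have hL := dependsOn_linkEvent X b
  have hL' := (dependsOn_linkEvent X !b).mem_compl
  rw [exclusiveEvent, bernoulliPr_inter_of_dependsOn
      (Disjoint.union_left (disjoint_linkClauses_outerClauses b)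
        (disjoint_linkClauses_outerClauses !b))
      (hL.mem_inter hL') (dependsOn_spineEvent X b),
    bernoulliPr_inter_of_dependsOn (disjoint_linkClauses b) hL hL', bernoulliPr_linkEvent,
    bernoulliPr_linkEvent_compl, bernoulliPr_spineEvent hsd]

lemma bernoulliPr_throughLastEvent (hsd : SDset (X : Set (Lit n))) :
    bernoulliPr p (throughLastEvent X) =
      (1 - (1 - p) ^ X.card) ^ 2 +
        2 * (1 - (1 - p) ^ X.card) * (1 - p) ^ X.card * spineProb (n + 1 - X.card) p := by
  have h₁ : Disjoint (linkEvent X true ∩ linkEvent X false) (exclusiveEvent X true) :=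
    Set.disjoint_left.2 fun _ h h' => h'.1.2 h.2
  have h₂ : Disjoint (linkEvent X true ∩ linkEvent X false ∪ exclusiveEvent X true)
      (exclusiveEvent X false) :=
    Set.disjoint_left.2 fun _ h h' => h'.1.2 (h.elim (·.1) (·.1.1))
  rw [throughLastEvent, bernoulliPr_union h₂, bernoulliPr_union h₁,
    bernoulliPr_inter_of_dependsOn (disjoint_linkClauses true) (dependsOn_linkEvent X true)
      (dependsOn_linkEvent X false),
    bernoulliPr_linkEvent, bernoulliPr_linkEvent, bernoulliPr_exclusiveEvent hsd,
    bernoulliPr_exclusiveEvent hsd]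
  ring

end NewVariable

lemma spineProb_nonneg {p : ℝ} (hp0 : 0 ≤ p) (hp1 : p ≤ 1) (m : ℕ) :
    0 ≤ spineProb m p := by
  unfold spineProb
  split
  exacts [bernoulliPr_nonneg hp0 hp1 _, le_rfl]

lemma one_sub_one_sub_pow_le {p : ℝ} (hp : p ≤ 2) (c : ℕ) : 1 - (1 - p) ^ c ≤ c * p := by
  have := one_add_mul_sub_le_pow (a := 1 - p) (by linarith) c
  linarith

lemma one_sub_one_sub_pow_sq_add_le {p s : ℝ} (hp0 : 0 ≤ p) (hp1 : p ≤ 1) (hs : 0 ≤ s)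
    (c : ℕ) :
    (1 - (1 - p) ^ c) ^ 2 + 2 * (1 - (1 - p) ^ c) * (1 - p) ^ c * s ≤
      p ^ 2 * (c : ℝ) ^ 2 + 2 * p * c * s := by
  have hq := one_sub_one_sub_pow_le (by linarith : p ≤ 2) c
  have hr0 : 0 ≤ (1 - p) ^ c := pow_nonneg (by linarith) c
  have hr1 : (1 - p) ^ c ≤ 1 := pow_le_one₀ (by linarith) (by linarith)
  have hqr : (1 - (1 - p) ^ c) * (1 - p) ^ c ≤ c * p := by nlinarith
  nlinarith

theorem cond_reach_after_adding_variable_general (n : ℕ) (p : ℝ)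
    (hp0 : 0 ≤ p) (hp1 : p ≤ 1) (x : Lit n) (X : Finset (Lit n))
    (hsd : SDset (↑X : Set (Lit n))) :
    bernoulliPr p
        ({ω : Sym2 (Lit (n + 1)) → Bool | freach ω (embedLit x) (negLit (embedLit x))} ∩
          {ω : Sym2 (Lit (n + 1)) → Bool |
            {y | reachBelow n ω (embedLit x) y} = embedLit '' (↑X : Set (Lit n))}) =
      ((1 - (1 - p) ^ X.card) ^ 2 +
          2 * (1 - (1 - p) ^ X.card) * (1 - p) ^ X.card *
            spineProb (n + 1 - X.card) p) *
        bernoulliPr p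
          {ω : Sym2 (Lit (n + 1)) → Bool |
            {y | reachBelow n ω (embedLit x) y} = embedLit '' (↑X : Set (Lit n))} ∧
    (1 - (1 - p) ^ X.card) ^ 2 +
        2 * (1 - (1 - p) ^ X.card) * (1 - p) ^ X.card *
          spineProb (n + 1 - X.card) p ≤
      p ^ 2 * (X.card : ℝ) ^ 2 +
        2 * p * (X.card : ℝ) * spineProb (n + 1 - X.card) p := by
  refine ⟨?_, one_sub_one_sub_pow_sq_add_le hp0 hp1 (spineProb_nonneg hp0 hp1 _) X.card⟩
  have hevent : {ω | freach ω (embedLit x) (negLit (embedLit x))} ∩ belowOutSetEvent x X =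
      throughLastEvent X ∩ belowOutSetEvent x X :=
    Set.ext fun ω => and_congr_left fun hB => freach_iff_mem_throughLastEvent hB hsd
  change bernoulliPr p (_ ∩ belowOutSetEvent x X) = _ * bernoulliPr p (belowOutSetEvent x X)
  rw [hevent, bernoulliPr_inter_of_dependsOn disjoint_compl_left (dependsOn_throughLastEvent X)
    (dependsOn_belowOutSetEvent x X), bernoulliPr_throughLastEvent hsd]

/-- Conditional on the out-set of `x` in `F_{n,p}` equalling
the fixed strictly distinct set `X`, the probability that `x ⇝ x̄` in
`F_{n+1,p}` is
`[1−(1−p)^{|X|}]² + 2[1−(1−p)^{|X|}](1−p)^{|X|}·Pr(x⇝x̄ in F_{n+1−|X|,p})`,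
which is at most `p²|X|² + 2p|X|·Pr(x⇝x̄ in F_{n+1−|X|,p})`.
(The conditional statement is expressed multiplied through by the probability
of the conditioning event.) -/
theorem cond_reach_after_adding_variable (n : ℕ) (p : ℝ)
    (hp0 : 0 ≤ p) (hp1 : p ≤ 1) (x : Lit n) (X : Finset (Lit n))
    (hxX : x ∈ X) (hsd : SDset (↑X : Set (Lit n))) :
    bernoulliPr p
        ({ω : Sym2 (Lit (n + 1)) → Bool | freach ω (embedLit x) (negLit (embedLit x))} ∩
          {ω : Sym2 (Lit (n + 1)) → Bool |
            {y | reachBelow n ω (embedLit x) y} = embedLit '' (↑X : Set (Lit n))}) =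
      ((1 - (1 - p) ^ X.card) ^ 2 +
          2 * (1 - (1 - p) ^ X.card) * (1 - p) ^ X.card *
            spineProb (n + 1 - X.card) p) *
        bernoulliPr p
          {ω : Sym2 (Lit (n + 1)) → Bool |
            {y | reachBelow n ω (embedLit x) y} = embedLit '' (↑X : Set (Lit n))} ∧
    (1 - (1 - p) ^ X.card) ^ 2 +
        2 * (1 - (1 - p) ^ X.card) * (1 - p) ^ X.card *
          spineProb (n + 1 - X.card) p ≤
      p ^ 2 * (X.card : ℝ) ^ 2 +
        2 * p * (X.card : ℝ) * spineProb (n + 1 - X.card) p :=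
  cond_reach_after_adding_variable_general n p hp0 hp1 x X hsd
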